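/- Let f₁,…,f_s : ℝ^d → ℝ be differentiable and convex, with each f_j being L_j-smooth (L_j > 0), let f = (1/s)·Σⱼ₌₁ˢ f_j and L̄ = (1/s)·Σⱼ₌₁ˢ L_j. Assume f is μ-strongly convex and L-smooth with 0 < μ ≤ L, and let x* be a minimizer of f. Let K ≥ 1, set L̃ = max{L, L̄/K}, σ = μ/L̃, let θ₁, θ₂ ∈ (0,1) with θ₁ + θ₂ ≤ 1, p ∈ (0,1], and η = θ₂/((1 + θ₂)·θ₁). Fix z, w, y ∈ ℝ^d and set x = θ₁·z + θ₂·w + (1 − θ₁ − θ₂)·y. Let J₁,…,J_K be i.i.d. random indices in Fin s with P(J = j) = L_j/(s·L̄), let g = (1/K)·Σₘ₌₁ᴷ (L̄/L_{Jₘ})·(∇f_{Jₘ}(x) − ∇f_{Jₘ}(w)) + ∇f(w), and let B be a Bernoulli random variable with P(B = 1) = p independent of (J₁,…,J_K). Define z⁺ = (1/(1 + ησ))·(ησ·x + z − (η/L̃)·g), y⁺ = x + θ₁·(z⁺ − z), w⁺ = y if B = 1 and w⁺ = w otherwise, and Z(v) = (L̃(1 + ησ)/(2η))·‖v − x*‖²,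 Y(v) = (1/θ₁)·(f(v) − f(x*)), W(v) = (θ₂(1 + θ₁)/(pθ₁))·(f(v) − f(x*)). Then E[Z(z⁺) + Y(y⁺) + W(w⁺)] ≤ (1/(1 + ησ))·Z(z) + (1 − θ₁(1 − θ₂))·Y(y) + (1 − pθ₁/(1 + θ₁))·W(w). -/

import Mathlib

open MeasureTheory ProbabilityTheory
open scoped RealInnerProductSpace ENNReal

/-!
Write `G = ∇f(x)` and `D = f(w) - f(x) - ⟪G, w - x⟫` (a Bregman divergence). The step `z⁺`
minimises `⟪g, v⟫ + (L̃/2η)‖v - z‖² + (μ/2)‖v - x‖²`, so the three-point identity, the descent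
lemma for `y⁺ = x + θ₁(z⁺ - z)`, Young's inequality for `⟪G - g, z⁺ - z⟫` and (strong) convexity
of `f` at `x` give, for every sample,
`Z(z⁺) + Y(y⁺) ≤ Z(z)/(1 + ησ) + ((1 - θ₁ - θ₂)(f y - f x*) + θ₂(f w - f x* - D))/θ₁`
`  - ⟪g - G, z - x*⟫ + θ₂/(2L̃θ₁)‖g - G‖²`.
The estimator is unbiased; by independence of the samples and cocoercivity
`‖∇f_j x - ∇f_j w‖² ≤ 2L_j D_{f_j}(x, w)`, its variance is at most `(2L̄/K) D ≤ 2L̃ D`, which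
cancels the `-θ₂D/θ₁` term. The coin contributes `E W(w⁺) = p W(y) + (1 - p) W(w)`, and
collecting coefficients gives the contraction.
-/

section InnerProductSpace

variable {E : Type*} [NormedAddCommGroup E] [InnerProductSpace ℝ E]

theorem two_mul_mul_inner_le (a b : ℝ) (u v : E) :
    2 * a * b * ⟪u, v⟫ ≤ b ^ 2 * ‖u‖ ^ 2 + a ^ 2 * ‖v‖ ^ 2 := by
  have h := norm_sub_sq_real (b • u) (a • v)
  rw [norm_smul, norm_smul, real_inner_smul_left, real_inner_smul_right, Real.norm_eq_abs,
    Real.norm_eq_abs, mul_pow, mul_pow, sq_abs, sq_abs] at h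
  nlinarith [sq_nonneg ‖b • u - a • v‖]

theorem three_point_le_of_prox_eq_zero {a μ : ℝ} (hμ : 0 ≤ μ) {g z x zp : E}
    (hzp : g + a • (zp - z) + μ • (zp - x) = 0) (u : E) :
    ⟪g, zp - u⟫ + (a + μ) / 2 * ‖zp - u‖ ^ 2 + a / 2 * ‖zp - z‖ ^ 2
      ≤ a / 2 * ‖z - u‖ ^ 2 + μ / 2 * ‖x - u‖ ^ 2 := by
  have hg : g = -(a • (zp - z)) - μ • (zp - x) := by
    rw [← sub_eq_zero, ← hzp]; abel
  have hcos : ∀ b : E, ‖b - u‖ ^ 2 = ‖zp - u‖ ^ 2 - 2 * ⟪zp - b, zp - u⟫ + ‖zp - b‖ ^ 2 := by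
    intro b
    rw [real_inner_comm, ← norm_sub_sq_real, sub_sub_sub_cancel_left]
  rw [hg, inner_sub_left, inner_neg_left, real_inner_smul_left, real_inner_smul_left, hcos z,
    hcos x]
  nlinarith [mul_nonneg hμ (sq_nonneg ‖zp - x‖)]

theorem katyusha_zplus_optimality {μ Lt η σ : ℝ} (hLt : 0 < Lt) (hη : 0 < η) (hμ : 0 ≤ μ)
    (hσ : σ = μ / Lt) {x z g zp : E}
    (hzp : zp = (1 / (1 + η * σ)) • ((η * σ) • x + z - (η / Lt) • g)) :
    g + (Lt / η) • (zp - z) + μ • (zp - x) = 0 := by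
  have : 1 + η * σ ≠ 0 := by rw [hσ]; positivity
  subst hzp hσ
  match_scalars <;> field_simp <;> ring

end InnerProductSpace

section ConvexAnalysis

variable {E : Type*} [NormedAddCommGroup E] [InnerProductSpace ℝ E] [CompleteSpace E]

noncomputable def bregmanDiv (f : E → ℝ) (x w : E) : ℝ := f w - f x - ⟪gradient f x, w - x⟫

theorem ConvexOn.add_inner_gradient_le {f : E → ℝ} (hf : ConvexOn ℝ Set.univ f) {u : E}
    (hu : DifferentiableAt ℝ f u) (v : E) : f u + ⟪gradient f u, v - u⟫ ≤ f v := by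
  set ℓ : ℝ →ᵃ[ℝ] E := AffineMap.lineMap u v
  have hℓ0 : ℓ 0 = u := AffineMap.lineMap_apply_zero u v
  have hℓ1 : ℓ 1 = v := AffineMap.lineMap_apply_one u v
  have hfu : HasFDerivAt f (InnerProductSpace.toDual ℝ E (gradient f u)) (ℓ 0) := by
    rw [hℓ0]; exact hasGradientAt_iff_hasFDerivAt.mp hu.hasGradientAt
  have hderiv : HasDerivAt (f ∘ ℓ) ⟪gradient f u, v - u⟫ 0 :=
    hfu.comp_hasDerivAt 0 AffineMap.hasDerivAt_lineMap
  have := (hf.comp_affineMap ℓ).le_slope_of_hasDerivAt (Set.mem_univ 0) (Set.mem_univ 1)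
    one_pos hderiv
  rw [slope_def_field, Function.comp_apply, Function.comp_apply, hℓ0, hℓ1] at this
  linarith

theorem ConvexOn.norm_gradient_sub_sq_le {f : E → ℝ} (hf : ConvexOn ℝ Set.univ f) {L : ℝ}
    (hL : 0 < L) (hsmooth : ∀ u v, f v ≤ f u + ⟪gradient f u, v - u⟫ + L / 2 * ‖v - u‖ ^ 2)
    {x : E} (hx : DifferentiableAt ℝ f x) (w : E) :
    ‖gradient f x - gradient f w‖ ^ 2 ≤ 2 * L * bregmanDiv f x w := by
  set d := gradient f w - gradient f x
  have hlower := hf.add_inner_gradient_le hx (w - L⁻¹ • d)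
  have hupper := hsmooth w (w - L⁻¹ • d)
  have hd : ⟪gradient f w, d⟫ - ⟪gradient f x, d⟫ = ‖d‖ ^ 2 := by
    rw [← inner_sub_left, real_inner_self_eq_norm_sq]
  rw [sub_sub_cancel_left, norm_neg, norm_smul, Real.norm_eq_abs, abs_of_pos (inv_pos.2 hL),
    inner_neg_right, real_inner_smul_right] at hupper
  rw [sub_right_comm, inner_sub_right, real_inner_smul_right] at hlower
  rw [norm_sub_rev, bregmanDiv]
  have key : ‖d‖ ^ 2 / (2 * L) ≤ f w - f x - ⟪gradient f x, w - x⟫ := by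
    have : ‖d‖ ^ 2 / (2 * L) = L⁻¹ * (⟪gradient f w, d⟫ - ⟪gradient f x, d⟫)
        - L / 2 * (L⁻¹ * ‖d‖) ^ 2 := by
      rw [hd]; field_simp; ring
    rw [this]; linarith
  rwa [div_le_iff₀ (by positivity), mul_comm] at key

theorem gradient_const_mul_sum {ι : Type*} (t : Finset ι) (c : ℝ) {f : ι → E → ℝ} {u : E}
    (hf : ∀ j ∈ t, DifferentiableAt ℝ (f j) u) :
    gradient (fun v => c * ∑ j ∈ t, f j v) u = c • ∑ j ∈ t, gradient (f j) u := by
  refine HasGradientAt.gradient ?_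
  rw [hasGradientAt_iff_hasFDerivAt, map_smul, map_sum]
  exact (HasFDerivAt.fun_sum fun j hj =>
    hasGradientAt_iff_hasFDerivAt.mp (hf j hj).hasGradientAt).const_mul c

theorem bregmanDiv_const_mul_sum {ι : Type*} (t : Finset ι) (c : ℝ) {f : ι → E → ℝ} {x : E}
    (hf : ∀ j ∈ t, DifferentiableAt ℝ (f j) x) (w : E) :
    bregmanDiv (fun v => c * ∑ j ∈ t, f j v) x w = c * ∑ j ∈ t, bregmanDiv (f j) x w := by
  simp only [bregmanDiv, gradient_const_mul_sum t c hf, real_inner_smul_left, sum_inner,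
    Finset.sum_sub_distrib]
  ring

theorem katyusha_coupling_le {F : E → ℝ} {μ θ₁ θ₂ : ℝ} (hμ : 0 ≤ μ) (hθ₁ : 0 ≤ θ₁)
    (hθ : θ₁ + θ₂ ≤ 1)
    (hstrong : ∀ u v, F u + ⟪gradient F u, v - u⟫ + μ / 2 * ‖v - u‖ ^ 2 ≤ F v)
    {x y z w : E} (hx : x = θ₁ • z + θ₂ • w + (1 - θ₁ - θ₂) • y) (xs : E) :
    F x - F xs + θ₁ * (μ / 2 * ‖x - xs‖ ^ 2 - ⟪gradient F x, z - xs⟫)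
      ≤ (1 - θ₁ - θ₂) * (F y - F xs) + θ₂ * (F w - F xs - bregmanDiv F x w) := by
  have hz : θ₁ • (z - xs) = θ₁ • (x - xs) + θ₂ • (x - w) + (1 - θ₁ - θ₂) • (x - y) := by
    rw [hx]; module
  have hGz := congrArg (⟪gradient F x, ·⟫) hz
  simp only [inner_add_right, inner_sub_right, real_inner_smul_right] at hGz
  have hxs := hstrong x xs
  have hy := hstrong x y
  rw [norm_sub_rev] at hxs
  rw [bregmanDiv]
  simp only [inner_sub_right] at hxs hy ⊢
  nlinarith [mul_le_mul_of_nonneg_left hxs hθ₁,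
    mul_le_mul_of_nonneg_left hy (by linarith : 0 ≤ 1 - θ₁ - θ₂),
    mul_nonneg hμ (sq_nonneg ‖y - x‖)]

theorem katyusha_step_le {F : E → ℝ} {μ Lt θ₁ θ₂ η : ℝ} (hμ : 0 ≤ μ) (hLt : 0 < Lt)
    (hθ₁ : 0 < θ₁) (hθ₂ : 0 < θ₂) (hθ : θ₁ + θ₂ ≤ 1) (hη : η = θ₂ / ((1 + θ₂) * θ₁))
    (hstrong : ∀ u v, F u + ⟪gradient F u, v - u⟫ + μ / 2 * ‖v - u‖ ^ 2 ≤ F v)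
    (hsmooth : ∀ u v, F v ≤ F u + ⟪gradient F u, v - u⟫ + Lt / 2 * ‖v - u‖ ^ 2)
    {x y z w g zp : E} (hx : x = θ₁ • z + θ₂ • w + (1 - θ₁ - θ₂) • y)
    (hzp : g + (Lt / η) • (zp - z) + μ • (zp - x) = 0) (xs : E) :
    (Lt / η + μ) / 2 * ‖zp - xs‖ ^ 2 + 1 / θ₁ * (F (x + θ₁ • (zp - z)) - F xs)
      ≤ Lt / (2 * η) * ‖z - xs‖ ^ 2
        + ((1 - θ₁ - θ₂) * (F y - F xs) + θ₂ * (F w - F xs - bregmanDiv F x w)) / θ₁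
        - ⟪g - gradient F x, z - xs⟫ + θ₂ / (2 * Lt * θ₁) * ‖g - gradient F x‖ ^ 2 := by
  have hdescent := hsmooth x (x + θ₁ • (zp - z))
  rw [add_sub_cancel_left, real_inner_smul_right, norm_smul, Real.norm_eq_abs,
    abs_of_pos hθ₁, mul_pow] at hdescent
  -- Young's inequality with weight `Lt θ₁ / θ₂` makes the `‖zp - z‖²` terms cancel exactly,
  -- because `Lt / η = Lt θ₁ + Lt θ₁ / θ₂`.
  have hyoung := two_mul_mul_inner_le (Lt * θ₁) θ₂ (gradient F x - g) (zp - z)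
  have hprox := three_point_le_of_prox_eq_zero hμ hzp xs
  have hcouple := katyusha_coupling_le hμ hθ₁.le hθ hstrong hx xs
  have hsplit : ⟪gradient F x, zp - z⟫ = ⟪g, zp - xs⟫ - ⟪gradient F x, z - xs⟫
      - ⟪g - gradient F x, z - xs⟫ + ⟪gradient F x - g, zp - z⟫ := by
    simp only [inner_sub_left, inner_sub_right]; ring
  rw [norm_sub_rev g]
  subst hη
  field_simp
  field_simp at hprox
  linear_combination 2 * Lt * θ₂ * hdescent + 2 * Lt * θ₂ * θ₁ * hsplit + hyoung
    + Lt * θ₁ * hprox + 2 * Lt * θ₂ * hcouple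

end ConvexAnalysis

section Probability

variable {Ω S E : Type*} [MeasurableSpace Ω] {μ : Measure Ω}
  [Fintype S] [MeasurableSpace S] [MeasurableSingletonClass S]

theorem integrable_comp_of_finite [NormedAddCommGroup E] [IsFiniteMeasure μ] {T : Ω → S}
    (hT : Measurable T) (ψ : S → E) : Integrable (fun ω => ψ (T ω)) μ :=
  (integrable_map_measure StronglyMeasurable.of_discrete.aestronglyMeasurable
    hT.aemeasurable).mp Integrable.of_finite

theorem integral_comp_of_finite [NormedAddCommGroup E] [NormedSpace ℝ E] [CompleteSpace E]
    [IsFiniteMeasure μ] {T : Ω → S} (hT : Measurable T)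
    (ψ : S → E) : ∫ ω, ψ (T ω) ∂μ = ∑ j, μ.real (T ⁻¹' {j}) • ψ j := by
  rw [← integral_map hT.aemeasurable StronglyMeasurable.of_discrete.aestronglyMeasurable,
    integral_fintype Integrable.of_finite]
  simp only [map_measureReal_apply hT (measurableSet_singleton _)]

theorem integral_ite_of_measure_eq_ofReal [IsProbabilityMeasure μ] {B : Ω → Bool}
    (hB : Measurable B) {p : ℝ} (hp : 0 ≤ p) (hBp : μ {ω | B ω = true} = ENNReal.ofReal p)
    (a b : ℝ) : ∫ ω, (if B ω = true then a else b) ∂μ = p * a + (1 - p) * b := by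
  have htrue : μ.real (B ⁻¹' {true}) = p := by
    rw [measureReal_def, ← ENNReal.toReal_ofReal hp, ← hBp]; rfl
  have hfalse : μ.real (B ⁻¹' {false}) = 1 - p := by
    rw [← htrue, ← probReal_univ (μ := μ), ← measureReal_compl (hB (measurableSet_singleton _))]
    congr 1; ext ω; simp
  rw [integral_comp_of_finite hB fun c => if c = true then a else b, Fintype.sum_bool, htrue,
    hfalse]
  simp

variable [NormedAddCommGroup E] [InnerProductSpace ℝ E]

theorem integral_inner_comp_eq_zero_of_indepFun [IsFiniteMeasure μ] {U V : Ω → S}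
    (hU : Measurable U) (hV : Measurable V) (hUV : IndepFun U V μ) {P : S → ℝ}
    (hPU : ∀ j, μ.real (U ⁻¹' {j}) = P j) (hPV : ∀ j, μ.real (V ⁻¹' {j}) = P j)
    {X : S → E} (hX : ∑ j, P j • X j = 0) :
    ∫ ω, ⟪X (U ω), X (V ω)⟫ ∂μ = 0 := by
  have hlaw : ∀ q : S × S, μ.real ((fun ω => (U ω, V ω)) ⁻¹' {q}) = P q.1 * P q.2 := by
    rintro ⟨i, j⟩
    have hprod : (fun ω => (U ω, V ω)) ⁻¹' {(i, j)} = U ⁻¹' {i} ∩ V ⁻¹' {j} := by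
      ext ω; simp [Prod.ext_iff]
    rw [hprod, measureReal_def, hUV.measure_inter_preimage_eq_mul _ _
      (measurableSet_singleton i) (measurableSet_singleton j), ENNReal.toReal_mul,
      ← measureReal_def, ← measureReal_def, hPU, hPV]
  rw [integral_comp_of_finite (hU.prodMk hV) (fun q : S × S => ⟪X q.1, X q.2⟫)]
  calc ∑ q : S × S, μ.real ((fun ω => (U ω, V ω)) ⁻¹' {q}) • ⟪X q.1, X q.2⟫
      = ⟪∑ i, P i • X i, ∑ j, P j • X j⟫ := by
        simp only [hlaw, Fintype.sum_prod_type, sum_inner, inner_sum, real_inner_smul_left,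
          real_inner_smul_right, smul_eq_mul]
        exact Finset.sum_congr rfl fun i _ => Finset.sum_congr rfl fun j _ => by
          rw [real_inner_comm]; ring
    _ = 0 := by rw [hX, inner_zero_left]

theorem integral_norm_smul_sum_comp_sq [IsFiniteMeasure μ] {K : ℕ} {J : Fin K → Ω → S}
    (hJ : ∀ m, Measurable (J m)) (hind : iIndepFun J μ) {P : S → ℝ}
    (hP : ∀ m j, μ.real (J m ⁻¹' {j}) = P j) {X : S → E} (hX : ∑ j, P j • X j = 0) :
    ∫ ω, ‖(1 / (K : ℝ)) • ∑ m, X (J m ω)‖ ^ 2 ∂μ = 1 / K * ∑ j, P j * ‖X j‖ ^ 2 := by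
  have hexpand : ∀ ω, ‖(1 / (K : ℝ)) • ∑ m, X (J m ω)‖ ^ 2
      = (1 / K) ^ 2 * ∑ m, ∑ m', ⟪X (J m ω), X (J m' ω)⟫ := by
    intro ω
    rw [norm_smul, mul_pow, Real.norm_eq_abs, sq_abs, ← real_inner_self_eq_norm_sq, sum_inner]
    simp only [inner_sum]
  have hint : ∀ m m', Integrable (fun ω => ⟪X (J m ω), X (J m' ω)⟫) μ := fun m m' =>
    integrable_comp_of_finite ((hJ m).prodMk (hJ m')) fun q : S × S => ⟪X q.1, X q.2⟫
  have hpair : ∀ m m', ∫ ω, ⟪X (J m ω), X (J m' ω)⟫ ∂μ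
      = if m = m' then ∑ j, P j * ‖X j‖ ^ 2 else 0 := by
    intro m m'
    split_ifs with hmm
    · subst hmm
      simp only [real_inner_self_eq_norm_sq]
      rw [integral_comp_of_finite (hJ m) fun j => ‖X j‖ ^ 2]
      simp only [hP, smul_eq_mul]
    · exact integral_inner_comp_eq_zero_of_indepFun (hJ m) (hJ m') (hind.indepFun hmm) (hP m)
        (hP m') hX
  simp_rw [hexpand]
  rw [integral_const_mul,
    integral_finsetSum _ fun m _ => integrable_finsetSum _ fun m' _ => hint m m']
  simp_rw [integral_finsetSum _ fun m' _ => hint _ m', hpair, Finset.sum_ite_eq, Finset.mem_univ,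
    if_true, Finset.sum_const, Finset.card_univ, Fintype.card_fin, nsmul_eq_mul]
  rcases eq_or_ne (K : ℝ) 0 with hK | hK
  · simp [hK]
  · field_simp

theorem integral_smul_sum_comp_eq_zero [CompleteSpace E] [IsFiniteMeasure μ] {K : ℕ}
    {J : Fin K → Ω → S} (hJ : ∀ m, Measurable (J m)) {P : S → ℝ}
    (hP : ∀ m j, μ.real (J m ⁻¹' {j}) = P j) {X : S → E} (hX : ∑ j, P j • X j = 0) (c : ℝ) :
    ∫ ω, c • ∑ m, X (J m ω) ∂μ = 0 := by
  rw [integral_smul, integral_finsetSum _ fun m _ => integrable_comp_of_finite (hJ m) X]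
  simp only [integral_comp_of_finite (hJ _) X, hP, hX, Finset.sum_const_zero, smul_zero]

theorem integral_le_of_le_sub_inner_add_norm_sq [IsProbabilityMeasure μ] {A : Ω → ℝ} {g : Ω → E}
    {G v : E} {C c V : ℝ}
    (hA : Integrable A μ) (hg : ∀ φ : E → ℝ, Integrable (fun ω => φ (g ω)) μ)
    (hmean : ∀ u, ∫ ω, ⟪g ω - G, u⟫ ∂μ = 0) (hvar : ∫ ω, ‖g ω - G‖ ^ 2 ∂μ ≤ V) (hc : 0 ≤ c)
    (hle : ∀ ω, A ω ≤ C - ⟪g ω - G, v⟫ + c * ‖g ω - G‖ ^ 2) :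
    ∫ ω, A ω ∂μ ≤ C + c * V := by
  have hinner := hg fun u => ⟪u - G, v⟫
  have hnorm := hg fun u => ‖u - G‖ ^ 2
  have hlin : Integrable (fun ω => C - ⟪g ω - G, v⟫) μ := (integrable_const C).sub hinner
  have hrhs : Integrable (fun ω => C - ⟪g ω - G, v⟫ + c * ‖g ω - G‖ ^ 2) μ :=
    hlin.add (hnorm.const_mul c)
  refine (integral_mono hA hrhs hle).trans ?_
  rw [integral_add hlin (hnorm.const_mul c),
    integral_sub (integrable_const C) hinner, integral_const, hmean, integral_const_mul]
  simp only [probReal_univ, smul_eq_mul, one_mul, sub_zero]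
  gcongr

end Probability

section ImportanceSampling

variable {E : Type*} [NormedAddCommGroup E] [InnerProductSpace ℝ E]

theorem sum_mul_norm_sub_sum_smul_sq {ι : Type*} [Fintype ι] {P : ι → ℝ} (hP : ∑ i, P i = 1)
    (V : ι → E) :
    ∑ j, P j * ‖V j - ∑ i, P i • V i‖ ^ 2 = ∑ j, P j * ‖V j‖ ^ 2 - ‖∑ i, P i • V i‖ ^ 2 := by
  set m := ∑ i, P i • V i
  have hm : ∑ j, P j * ⟪V j, m⟫ = ‖m‖ ^ 2 := by
    rw [← real_inner_self_eq_norm_sq, sum_inner]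
    simp only [real_inner_smul_left]
  have hterm : ∀ j, P j * ‖V j - m‖ ^ 2
      = P j * ‖V j‖ ^ 2 - 2 * (P j * ⟪V j, m⟫) + P j * ‖m‖ ^ 2 := fun j => by
    rw [norm_sub_sq_real]; ring
  rw [Finset.sum_congr rfl fun j _ => hterm j, Finset.sum_add_distrib, Finset.sum_sub_distrib,
    ← Finset.mul_sum, ← Finset.sum_mul, hP, hm]
  ring

variable {s : ℕ} {Lf : Fin s → ℝ} {Lbar : ℝ}

theorem sum_div_mul_eq_one (hs : (s : ℝ) ≠ 0) (hLbar : Lbar = 1 / s * ∑ j, Lf j)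
    (hLbar0 : Lbar ≠ 0) : ∑ j, Lf j / (s * Lbar) = 1 := by
  rw [← Finset.sum_div, div_eq_one_iff_eq (mul_ne_zero hs hLbar0), hLbar]
  field_simp

theorem sum_div_mul_smul_div_smul (hs : (s : ℝ) ≠ 0) (hLf : ∀ j, Lf j ≠ 0) (hLbar0 : Lbar ≠ 0)
    (v : Fin s → E) :
    ∑ j, (Lf j / (s * Lbar)) • (Lbar / Lf j) • v j = (1 / s : ℝ) • ∑ j, v j := by
  rw [Finset.smul_sum]
  refine Finset.sum_congr rfl fun j _ => ?_
  rw [smul_smul]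
  congr 1
  field_simp [hLf j]

theorem sum_div_mul_mul_norm_smul_gradient_sub_sq_le [CompleteSpace E] (hs : (s : ℝ) ≠ 0)
    (hLf : ∀ j, 0 < Lf j) (hLbar0 : 0 < Lbar) {f : Fin s → E → ℝ}
    (hconv : ∀ j, ConvexOn ℝ Set.univ (f j))
    (hsmooth : ∀ j u v, f j v ≤ f j u + ⟪gradient (f j) u, v - u⟫ + Lf j / 2 * ‖v - u‖ ^ 2)
    {x : E} (hx : ∀ j, DifferentiableAt ℝ (f j) x) (w : E) :
    ∑ j, Lf j / (s * Lbar) * ‖(Lbar / Lf j) • (gradient (f j) x - gradient (f j) w)‖ ^ 2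
      ≤ 2 * Lbar * (1 / s * ∑ j, bregmanDiv (f j) x w) := by
  rw [Finset.mul_sum, Finset.mul_sum]
  refine Finset.sum_le_sum fun j _ => ?_
  have hco := (hconv j).norm_gradient_sub_sq_le (hLf j) (hsmooth j) (hx j) w
  rw [norm_smul, mul_pow, Real.norm_eq_abs, sq_abs]
  calc Lf j / (s * Lbar) * ((Lbar / Lf j) ^ 2 * ‖gradient (f j) x - gradient (f j) w‖ ^ 2)
      = Lbar / s * (‖gradient (f j) x - gradient (f j) w‖ ^ 2 / Lf j) := by
        field_simp [(hLf j).ne']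
    _ ≤ Lbar / s * (2 * bregmanDiv (f j) x w) := by
        gcongr
        rw [div_le_iff₀ (hLf j)]
        linarith
    _ = 2 * Lbar * (1 / s * bregmanDiv (f j) x w) := by ring

theorem importance_sampled_estimator [CompleteSpace E] {Ω : Type*} [MeasurableSpace Ω]
    {μ : Measure Ω} [IsProbabilityMeasure μ] {K : ℕ} (hs : 0 < s) (hK : K ≠ 0)
    {f : Fin s → E → ℝ} (hLf : ∀ j, 0 < Lf j) (hdiff : ∀ j, Differentiable ℝ (f j))
    (hconv : ∀ j, ConvexOn ℝ Set.univ (f j))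
    (hsmooth : ∀ j u v, f j v ≤ f j u + ⟪gradient (f j) u, v - u⟫ + Lf j / 2 * ‖v - u‖ ^ 2)
    {F : E → ℝ} (hF : F = fun u => 1 / (s : ℝ) * ∑ j, f j u)
    (hLbar : Lbar = 1 / (s : ℝ) * ∑ j, Lf j)
    {J : Fin K → Ω → Fin s} (hJ : ∀ m, Measurable (J m)) (hind : iIndepFun J μ)
    (hlaw : ∀ m j, μ {ω | J m ω = j} = ENNReal.ofReal (Lf j / (s * Lbar)))
    {x w : E} {g : Ω → E}
    (hg : ∀ ω, g ω = (1 / (K : ℝ)) • ∑ m, (Lbar / Lf (J m ω)) •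
        (gradient (f (J m ω)) x - gradient (f (J m ω)) w) + gradient F w) :
    (∀ φ : E → ℝ, Integrable (fun ω => φ (g ω)) μ)
      ∧ (∀ u, ∫ ω, ⟪g ω - gradient F x, u⟫ ∂μ = 0)
      ∧ ∫ ω, ‖g ω - gradient F x‖ ^ 2 ∂μ ≤ 2 * (Lbar / K) * bregmanDiv F x w := by
  have hs' : (s : ℝ) ≠ 0 := by positivity
  have hLbar0 : 0 < Lbar := by
    rw [hLbar]
    exact mul_pos (by positivity) (Finset.sum_pos (fun j _ => hLf j) ⟨⟨0, hs⟩, Finset.mem_univ _⟩)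
  set P : Fin s → ℝ := fun j => Lf j / (s * Lbar)
  set V : Fin s → E := fun j => (Lbar / Lf j) • (gradient (f j) x - gradient (f j) w)
  set X : Fin s → E := fun j => V j - ∑ i, P i • V i
  have hP : ∀ m j, μ.real (J m ⁻¹' {j}) = P j := fun m j => by
    change (μ {ω | J m ω = j}).toReal = Lf j / (s * Lbar)
    rw [hlaw, ENNReal.toReal_ofReal (div_pos (hLf j) (by positivity)).le]
  have hP1 : ∑ j, P j = 1 := sum_div_mul_eq_one hs' hLbar hLbar0.ne'
  have hPV : ∑ j, P j • V j = gradient F x - gradient F w := by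
    rw [sum_div_mul_smul_div_smul hs' (fun j => (hLf j).ne') hLbar0.ne', hF,
      gradient_const_mul_sum _ _ fun j _ => (hdiff j) x,
      gradient_const_mul_sum _ _ fun j _ => (hdiff j) w, Finset.sum_sub_distrib, smul_sub]
  have hPX : ∑ j, P j • X j = 0 := by
    simp only [X, smul_sub, Finset.sum_sub_distrib, ← Finset.sum_smul, hP1, one_smul, sub_self]
  have hgX : ∀ ω, g ω - gradient F x = (1 / (K : ℝ)) • ∑ m, X (J m ω) := by
    intro ω
    rw [hg ω, Finset.sum_sub_distrib, Finset.sum_const, Finset.card_univ, Fintype.card_fin,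
      smul_sub, ← Nat.cast_smul_eq_nsmul ℝ, smul_smul, one_div_mul_cancel (Nat.cast_ne_zero.mpr hK),
      one_smul, hPV]
    abel
  have hT : Measurable fun ω m => J m ω := measurable_pi_lambda _ hJ
  have hXint : Integrable (fun ω => (1 / (K : ℝ)) • ∑ m, X (J m ω)) μ :=
    integrable_comp_of_finite hT fun t => (1 / (K : ℝ)) • ∑ m, X (t m)
  refine ⟨fun φ => ?_, fun u => ?_, ?_⟩
  · simp only [hg]
    exact integrable_comp_of_finite hT fun t => φ ((1 / (K : ℝ)) • ∑ m, V (t m) + gradient F w)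
  · simp only [hgX, real_inner_comm u]
    rw [integral_inner hXint, integral_smul_sum_comp_eq_zero hJ hP hPX, inner_zero_right]
  · simp only [hgX]
    rw [integral_norm_smul_sum_comp_sq hJ hind hP hPX, sum_mul_norm_sub_sum_smul_sq hP1]
    have hvar := sum_div_mul_mul_norm_smul_gradient_sub_sq_le hs' hLf hLbar0 hconv hsmooth
      (fun j => (hdiff j) x) w
    rw [hF, bregmanDiv_const_mul_sum _ _ fun j _ => (hdiff j) x]
    calc 1 / (K : ℝ) * (∑ j, P j * ‖V j‖ ^ 2 - ‖∑ i, P i • V i‖ ^ 2)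
        ≤ 1 / K * (2 * Lbar * (1 / s * ∑ j, bregmanDiv (f j) x w)) := by
          gcongr
          linarith [sq_nonneg ‖∑ i, P i • V i‖]
      _ = 2 * (Lbar / K) * (1 / s * ∑ j, bregmanDiv (f j) x w) := by ring

end ImportanceSampling

theorem katyusha_integral_le {E Ω : Type*} [NormedAddCommGroup E] [InnerProductSpace ℝ E]
    [CompleteSpace E] [MeasurableSpace Ω] {P : Measure Ω} [IsProbabilityMeasure P]
    {F : E → ℝ} {μ Lt θ₁ θ₂ η σ : ℝ} (hμ : 0 ≤ μ) (hLt : 0 < Lt) (hθ₁ : 0 < θ₁) (hθ₂ : 0 < θ₂)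
    (hθ : θ₁ + θ₂ ≤ 1) (hη : η = θ₂ / ((1 + θ₂) * θ₁)) (hσ : σ = μ / Lt)
    (hstrong : ∀ u v, F u + ⟪gradient F u, v - u⟫ + μ / 2 * ‖v - u‖ ^ 2 ≤ F v)
    (hsmooth : ∀ u v, F v ≤ F u + ⟪gradient F u, v - u⟫ + Lt / 2 * ‖v - u‖ ^ 2)
    {x y z w : E} (hx : x = θ₁ • z + θ₂ • w + (1 - θ₁ - θ₂) • y)
    {g : Ω → E} (hg : ∀ φ : E → ℝ, Integrable (fun ω => φ (g ω)) P)
    (hmean : ∀ u, ∫ ω, ⟪g ω - gradient F x, u⟫ ∂P = 0)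
    (hvar : ∫ ω, ‖g ω - gradient F x‖ ^ 2 ∂P ≤ 2 * Lt * bregmanDiv F x w)
    {zplus yplus : Ω → E}
    (hzplus : ∀ ω, zplus ω = (1 / (1 + η * σ)) • ((η * σ) • x + z - (η / Lt) • g ω))
    (hyplus : ∀ ω, yplus ω = x + θ₁ • (zplus ω - z)) {xs : E} {Z Y : E → ℝ}
    (hZ : ∀ v, Z v = Lt * (1 + η * σ) / (2 * η) * ‖v - xs‖ ^ 2)
    (hY : ∀ v, Y v = 1 / θ₁ * (F v - F xs)) :
    Integrable (fun ω => Z (zplus ω) + Y (yplus ω)) P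
      ∧ ∫ ω, Z (zplus ω) + Y (yplus ω) ∂P
        ≤ Lt / (2 * η) * ‖z - xs‖ ^ 2
          + ((1 - θ₁ - θ₂) * (F y - F xs) + θ₂ * (F w - F xs)) / θ₁ := by
  have hη0 : 0 < η := hη ▸ by positivity
  have hZY : Integrable (fun ω => Z (zplus ω) + Y (yplus ω)) P := by
    simp only [hyplus, hzplus]
    exact hg fun v => Z ((1 / (1 + η * σ)) • ((η * σ) • x + z - (η / Lt) • v))
      + Y (x + θ₁ • ((1 / (1 + η * σ)) • ((η * σ) • x + z - (η / Lt) • v) - z))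
  have hZcoef : Lt * (1 + η * σ) / (2 * η) = (Lt / η + μ) / 2 := by
    rw [hσ]; field_simp
  have hstep : ∀ ω, Z (zplus ω) + Y (yplus ω) ≤ Lt / (2 * η) * ‖z - xs‖ ^ 2
      + ((1 - θ₁ - θ₂) * (F y - F xs) + θ₂ * (F w - F xs - bregmanDiv F x w)) / θ₁
      - ⟪g ω - gradient F x, z - xs⟫ + θ₂ / (2 * Lt * θ₁) * ‖g ω - gradient F x‖ ^ 2 := by
    intro ω
    rw [hZ, hY, hyplus, hZcoef]
    exact katyusha_step_le hμ hLt hθ₁ hθ₂ hθ hη hstrong hsmooth hx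
      (katyusha_zplus_optimality hLt hη0 hμ hσ (hzplus ω)) xs
  refine ⟨hZY, (integral_le_of_le_sub_inner_add_norm_sq hZY hg hmean hvar (by positivity)
    hstep).trans_eq ?_⟩
  field_simp
  ring

theorem dvpl_katyusha_lyapunov_contraction_general
    {s d K : ℕ} (hs : 0 < s) (hK : 1 ≤ K)
    (f : Fin s → EuclideanSpace ℝ (Fin d) → ℝ)
    (Lf : Fin s → ℝ) (hLf : ∀ j, 0 < Lf j)
    (hdiff : ∀ j, Differentiable ℝ (f j))
    (hconv : ∀ j, ConvexOn ℝ Set.univ (f j))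
    (hsmoothj : ∀ j, ∀ u v : EuclideanSpace ℝ (Fin d),
      f j v ≤ f j u + ⟪gradient (f j) u, v - u⟫ + Lf j / 2 * ‖v - u‖ ^ 2)
    (F : EuclideanSpace ℝ (Fin d) → ℝ)
    (hF : F = fun u => (1 / (s : ℝ)) * ∑ j, f j u)
    (Lbar : ℝ) (hLbar : Lbar = (1 / (s : ℝ)) * ∑ j, Lf j)
    {μ L : ℝ} (hμ : 0 < μ) (hμL : μ ≤ L)
    (hstrong : ∀ u v : EuclideanSpace ℝ (Fin d),
      F v ≥ F u + ⟪gradient F u, v - u⟫ + μ / 2 * ‖v - u‖ ^ 2)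
    (hsmooth : ∀ u v : EuclideanSpace ℝ (Fin d),
      F v ≤ F u + ⟪gradient F u, v - u⟫ + L / 2 * ‖v - u‖ ^ 2)
    (xstar : EuclideanSpace ℝ (Fin d))
    {Ltil σ θ₁ θ₂ p η : ℝ}
    (hLtil : Ltil = max L (Lbar / (K : ℝ))) (hσ : σ = μ / Ltil)
    (hθ₁ : θ₁ ∈ Set.Ioo (0 : ℝ) 1) (hθ₂ : θ₂ ∈ Set.Ioo (0 : ℝ) 1) (hθ : θ₁ + θ₂ ≤ 1)
    (hp : p ∈ Set.Ioc (0 : ℝ) 1)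
    (hη : η = θ₂ / ((1 + θ₂) * θ₁))
    (z w y x : EuclideanSpace ℝ (Fin d))
    (hx : x = θ₁ • z + θ₂ • w + (1 - θ₁ - θ₂) • y)
    {Ω : Type*} [MeasureSpace Ω] [IsProbabilityMeasure (ℙ : Measure Ω)]
    (J : Fin K → Ω → Fin s)
    (hJmeas : ∀ m, Measurable (J m))
    (hJindep : iIndepFun J ℙ)
    (hJlaw : ∀ m, ∀ j : Fin s,
      ℙ {ω | J m ω = j} = ENNReal.ofReal (Lf j / ((s : ℝ) * Lbar)))
    (g : Ω → EuclideanSpace ℝ (Fin d))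
    (hg : ∀ ω, g ω = (1 / (K : ℝ)) •
        ∑ m : Fin K, (Lbar / Lf (J m ω)) •
          (gradient (f (J m ω)) x - gradient (f (J m ω)) w)
      + gradient F w)
    (B : Ω → Bool) (hBmeas : Measurable B)
    (hBp : ℙ {ω | B ω = true} = ENNReal.ofReal p)
    (zplus yplus wplus : Ω → EuclideanSpace ℝ (Fin d))
    (hzplus : ∀ ω, zplus ω = (1 / (1 + η * σ)) • ((η * σ) • x + z - (η / Ltil) • g ω))
    (hyplus : ∀ ω, yplus ω = x + θ₁ • (zplus ω - z))
    (hwplus : ∀ ω, wplus ω = if B ω = true then y else w)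
    (Z Y W : EuclideanSpace ℝ (Fin d) → ℝ)
    (hZ : ∀ v, Z v = Ltil * (1 + η * σ) / (2 * η) * ‖v - xstar‖ ^ 2)
    (hY : ∀ v, Y v = (1 / θ₁) * (F v - F xstar))
    (hW : ∀ v, W v = θ₂ * (1 + θ₁) / (p * θ₁) * (F v - F xstar)) :
    ∫ ω, (Z (zplus ω) + Y (yplus ω) + W (wplus ω)) ∂ℙ
      ≤ (1 / (1 + η * σ)) * Z z + (1 - θ₁ * (1 - θ₂)) * Y y
        + (1 - p * θ₁ / (1 + θ₁)) * W w := by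
  obtain ⟨hθ₁0, -⟩ := hθ₁
  obtain ⟨hθ₂0, -⟩ := hθ₂
  have hLtil0 : 0 < Ltil := (hμ.trans_le hμL).trans_le (hLtil ▸ le_max_left _ _)
  have hD : 0 ≤ bregmanDiv F x w := by
    have := hstrong x w
    have : 0 ≤ μ / 2 * ‖w - x‖ ^ 2 := by positivity
    rw [bregmanDiv]
    linarith
  obtain ⟨hgφ, hmean, hvar⟩ := importance_sampled_estimator hs (by omega) hLf hdiff hconv
    hsmoothj hF hLbar hJmeas hJindep hJlaw hg
  obtain ⟨hZYint, hZY⟩ := katyusha_integral_le hμ.le hLtil0 hθ₁0 hθ₂0 hθ hη hσ hstrong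
    (fun u v => (hsmooth u v).trans (by gcongr; exact hLtil ▸ le_max_left _ _)) hx hgφ hmean
    (hvar.trans (by gcongr; exact hLtil ▸ le_max_right _ _)) hzplus hyplus hZ hY
  simp only [hwplus, apply_ite W]
  rw [integral_add hZYint (integrable_comp_of_finite hBmeas fun b => if b then W y else W w),
    integral_ite_of_measure_eq_ofReal hBmeas hp.1.le hBp]
  have hσ0 : 1 + η * σ ≠ 0 := by rw [hσ, hη]; positivity
  have hp0 := hp.1.ne'
  refine (add_le_add_left hZY _).trans_eq ?_
  rw [hZ, hY, hW y, hW w]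
  field_simp
  ring

/-- **One-iteration Lyapunov contraction of the DVPL-Katyusha algorithm** (vertical
federated regime): let `f₁, …, f_s : ℝ^d → ℝ` be differentiable and convex with `f_j` being
`L_j`-smooth, `f = (1/s)·∑ⱼ f_j`, `L̄ = (1/s)·∑ⱼ L_j`; assume `f` is `μ`-strongly convex
and `L`-smooth with `0 < μ ≤ L`, with minimizer `x*`. With `L̃ = max{L, L̄/K}`, `σ = μ/L̃`,
`θ₁, θ₂ ∈ (0,1)`, `θ₁ + θ₂ ≤ 1`, `p ∈ (0,1]`, `η = θ₂/((1 + θ₂)·θ₁)`,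
`x = θ₁·z + θ₂·w + (1 − θ₁ − θ₂)·y`, an importance-sampled minibatch `J₁, …, J_K` of
i.i.d. indices with `P(J = j) = L_j/(s·L̄)`, the gradient estimator
`g = (1/K)·∑ₘ (L̄/L_{Jₘ})·(∇f_{Jₘ}(x) − ∇f_{Jₘ}(w)) + ∇f(w)`, and a Bernoulli(`p`) coin
`B` independent of the sampled indices, setting
`z⁺ = (1/(1 + ησ))·(ησ·x + z − (η/L̃)·g)`, `y⁺ = x + θ₁·(z⁺ − z)`, `w⁺ = y` if `B = 1`
else `w`, `Z(v) = (L̃(1 + ησ)/(2η))·‖v − x*‖²`, `Y(v) = (1/θ₁)·(f(v) − f(x*))` and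
`W(v) = (θ₂(1 + θ₁)/(pθ₁))·(f(v) − f(x*))`, one has
`E[Z(z⁺) + Y(y⁺) + W(w⁺)] ≤ (1/(1 + ησ))·Z(z) + (1 − θ₁(1 − θ₂))·Y(y)
  + (1 − pθ₁/(1 + θ₁))·W(w)`. -/
theorem dvpl_katyusha_lyapunov_contraction
    {s d K : ℕ} (hs : 0 < s) (hK : 1 ≤ K)
    (f : Fin s → EuclideanSpace ℝ (Fin d) → ℝ)
    (Lf : Fin s → ℝ) (hLf : ∀ j, 0 < Lf j)
    (hdiff : ∀ j, Differentiable ℝ (f j))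
    (hconv : ∀ j, ConvexOn ℝ Set.univ (f j))
    (hsmoothj : ∀ j, ∀ u v : EuclideanSpace ℝ (Fin d),
      f j v ≤ f j u + ⟪gradient (f j) u, v - u⟫ + Lf j / 2 * ‖v - u‖ ^ 2)
    (F : EuclideanSpace ℝ (Fin d) → ℝ)
    (hF : F = fun u => (1 / (s : ℝ)) * ∑ j, f j u)
    (Lbar : ℝ) (hLbar : Lbar = (1 / (s : ℝ)) * ∑ j, Lf j)
    {μ L : ℝ} (hμ : 0 < μ) (hμL : μ ≤ L)
    (hstrong : ∀ u v : EuclideanSpace ℝ (Fin d),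
      F v ≥ F u + ⟪gradient F u, v - u⟫ + μ / 2 * ‖v - u‖ ^ 2)
    (hsmooth : ∀ u v : EuclideanSpace ℝ (Fin d),
      F v ≤ F u + ⟪gradient F u, v - u⟫ + L / 2 * ‖v - u‖ ^ 2)
    (xstar : EuclideanSpace ℝ (Fin d)) (hmin : ∀ v, F xstar ≤ F v)
    {Ltil σ θ₁ θ₂ p η : ℝ}
    (hLtil : Ltil = max L (Lbar / (K : ℝ))) (hσ : σ = μ / Ltil)
    (hθ₁ : θ₁ ∈ Set.Ioo (0 : ℝ) 1) (hθ₂ : θ₂ ∈ Set.Ioo (0 : ℝ) 1) (hθ : θ₁ + θ₂ ≤ 1)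
    (hp : p ∈ Set.Ioc (0 : ℝ) 1)
    (hη : η = θ₂ / ((1 + θ₂) * θ₁))
    (z w y x : EuclideanSpace ℝ (Fin d))
    (hx : x = θ₁ • z + θ₂ • w + (1 - θ₁ - θ₂) • y)
    {Ω : Type*} [MeasureSpace Ω] [IsProbabilityMeasure (ℙ : Measure Ω)]
    (J : Fin K → Ω → Fin s)
    (hJmeas : ∀ m, Measurable (J m))
    (hJindep : iIndepFun J ℙ)
    (hJlaw : ∀ m, ∀ j : Fin s,
      ℙ {ω | J m ω = j} = ENNReal.ofReal (Lf j / ((s : ℝ) * Lbar)))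
    (g : Ω → EuclideanSpace ℝ (Fin d))
    (hg : ∀ ω, g ω = (1 / (K : ℝ)) •
        ∑ m : Fin K, (Lbar / Lf (J m ω)) •
          (gradient (f (J m ω)) x - gradient (f (J m ω)) w)
      + gradient F w)
    (B : Ω → Bool) (hBmeas : Measurable B)
    (hBp : ℙ {ω | B ω = true} = ENNReal.ofReal p)
    (hindep : IndepFun (fun ω => fun m => J m ω) B ℙ)
    (zplus yplus wplus : Ω → EuclideanSpace ℝ (Fin d))
    (hzplus : ∀ ω, zplus ω = (1 / (1 + η * σ)) • ((η * σ) • x + z - (η / Ltil) • g ω))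
    (hyplus : ∀ ω, yplus ω = x + θ₁ • (zplus ω - z))
    (hwplus : ∀ ω, wplus ω = if B ω = true then y else w)
    (Z Y W : EuclideanSpace ℝ (Fin d) → ℝ)
    (hZ : ∀ v, Z v = Ltil * (1 + η * σ) / (2 * η) * ‖v - xstar‖ ^ 2)
    (hY : ∀ v, Y v = (1 / θ₁) * (F v - F xstar))
    (hW : ∀ v, W v = θ₂ * (1 + θ₁) / (p * θ₁) * (F v - F xstar)) :
    ∫ ω, (Z (zplus ω) + Y (yplus ω) + W (wplus ω)) ∂ℙ
      ≤ (1 / (1 + η * σ)) * Z z + (1 - θ₁ * (1 - θ₂)) * Y y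
        + (1 - p * θ₁ / (1 + θ₁)) * W w :=
  dvpl_katyusha_lyapunov_contraction_general hs hK f Lf hLf hdiff hconv hsmoothj F hF Lbar hLbar hμ
    hμL hstrong hsmooth xstar hLtil hσ hθ₁ hθ₂ hθ hp hη z w y x hx J hJmeas hJindep hJlaw g hg B
    hBmeas hBp zplus yplus wplus hzplus hyplus hwplus Z Y W hZ hY hW
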